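/- arXiv:0811.0751 — 4 statements merged into one kernel-verified Lean document; each statement's English description precedes it below -/
import Mathlib

section
/- Let M be a cancellative monoid and let g be an element of M such that gM = Mg (g is quasi-central). Then the set of left-divisors of g equals the set of right-divisors of g. -/
/-!
If `h * k = g`, then `h * g ∈ Mg = gM`, say `h * g = g * a`; cancelling `h` on the left of
`h * g = h * k * a` gives `g = k * a`. Likewise `g * k ∈ gM = Mg`, say `g * k = t * g`, and then
`g * g = g * k * a = t * g * a = t * h * g`, so `g = t * h` after cancelling `g` on the right.
The converse is the same argument in the opposite monoid.
-/

/-- An element `g` of a monoid is quasi-central if `gM = Mg` as sets. -/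
def QuasiCentral {M : Type*} [Monoid M] (g : M) : Prop :=
  ∀ x : M, (∃ m, x = g * m) ↔ (∃ m, x = m * g)

open MulOpposite

namespace QuasiCentral

variable {M : Type*} [Monoid M] {g h : M}

protected theorem op (hg : QuasiCentral g) : QuasiCentral (MulOpposite.op g) := fun x => by
  simpa only [op_surjective.exists, ← unop_inj, unop_mul, unop_op] using (hg (unop x)).symm

theorem exists_eq_mul_right_of_dvd (hg : QuasiCentral g) (hh : IsLeftRegular h)
    (hgr : IsRightRegular g) (hdvd : h ∣ g) : ∃ t, g = t * h := by
  obtain ⟨k, hk⟩ := hdvd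
  obtain ⟨a, ha⟩ := (hg (h * g)).2 ⟨h, rfl⟩
  have hka : g = k * a := hh <| by
    change h * g = h * (k * a)
    rw [ha, ← mul_assoc, ← hk]
  obtain ⟨t, ht⟩ := (hg (g * k)).1 ⟨k, rfl⟩
  refine ⟨t, hgr ?_⟩
  change g * g = t * h * g
  calc g * g = g * k * a := by rw [mul_assoc, ← hka]
    _ = t * (g * a) := by rw [ht, mul_assoc]
    _ = t * h * g := by rw [← ha, mul_assoc]

theorem exists_eq_mul_left_of_eq_mul (hg : QuasiCentral g) (hh : IsRightRegular h)
    (hgl : IsLeftRegular g) {k : M} (hk : g = k * h) : ∃ t, g = h * t := by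
  obtain ⟨t, ht⟩ := hg.op.exists_eq_mul_right_of_dvd (IsLeftRegular.op hh) (IsRightRegular.op hgl)
    ⟨MulOpposite.op k, by rw [hk, op_mul]⟩
  exact ⟨unop t, by simpa using congrArg unop ht⟩

end QuasiCentral

/-- In a cancellative monoid, the left-divisors of a quasi-central element
coincide with its right-divisors. -/
theorem stmt_2 (M : Type*) [Monoid M]
    (hcl : ∀ a b c : M, a * b = a * c → b = c)
    (hcr : ∀ a b c : M, b * a = c * a → b = c)
    (g : M) (hg : QuasiCentral g) :
    ∀ h : M, (∃ k, g = h * k) ↔ (∃ k, g = k * h) := fun h =>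
  ⟨hg.exists_eq_mul_right_of_dvd (fun _ _ => hcl h _ _) (fun _ _ => hcr g _ _),
    fun ⟨_, hk⟩ => hg.exists_eq_mul_left_of_eq_mul (fun _ _ => hcr h _ _) (fun _ _ => hcl g _ _) hk⟩
end

section
/- Let M be a cancellative atomic monoid in which any two elements have a least common multiple for left-divisibility, and suppose Δ is a quasi-central element such that every element of M left-divides some power of Δ. Then for every g in M, the set {h^{-1}(h ∨ g) : h in M} (of right complements of g in lcms) has a least common multiple Δ_g for left-divisibility; moreover g left-divides Δ_g and M·Δ_g ⊆ g·M. -/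
/-!
All right complements of `g` left-divide `Δ ^ n` as soon as `g` does, because `Δ ^ n` is
quasi-central. In a noetherian monoid with binary lcms, a family with a common multiple `B` has
an lcm: among the elements left-dividing every common multiple of the family, take one, `t`,
whose cofactor `c` in `B = t * c` is minimal for the factor relation; joining any member `s`
to `t` can only shorten the cofactor, so `t ∨ s = t`. The two extra properties of `Δ_g` are
read off from the complements `1⁻¹(1 ∨ g)` and `m⁻¹(m ∨ g)`.
-/

/-- Left-divisibility in a monoid. -/
def LeftDvd {M : Type*} [Monoid M] (a b : M) : Prop := ∃ c, b = a * c

section LeftLcm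

variable {M : Type*} [Monoid M]

theorem LeftDvd.trans {a b c : M} (hab : LeftDvd a b) (hbc : LeftDvd b c) : LeftDvd a c := by
  obtain ⟨x, rfl⟩ := hab
  obtain ⟨y, rfl⟩ := hbc
  exact ⟨x * y, mul_assoc a x y⟩

theorem QuasiCentral.one : QuasiCentral (1 : M) :=
  fun x => ⟨fun ⟨m, hm⟩ => ⟨m, by simpa using hm⟩, fun ⟨m, hm⟩ => ⟨m, by simpa using hm⟩⟩

theorem QuasiCentral.mul {a b : M} (ha : QuasiCentral a) (hb : QuasiCentral b) :
    QuasiCentral (a * b) := by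
  intro x
  constructor
  · rintro ⟨m, rfl⟩
    obtain ⟨m₁, hm₁⟩ := (hb (b * m)).mp ⟨m, rfl⟩
    obtain ⟨m₂, hm₂⟩ := (ha (a * m₁)).mp ⟨m₁, rfl⟩
    exact ⟨m₂, by rw [mul_assoc, hm₁, ← mul_assoc, hm₂, mul_assoc]⟩
  · rintro ⟨m, rfl⟩
    obtain ⟨m₁, hm₁⟩ := (ha (m * a)).mpr ⟨m, rfl⟩
    obtain ⟨m₂, hm₂⟩ := (hb (m₁ * b)).mpr ⟨m₁, rfl⟩
    exact ⟨m₂, by rw [← mul_assoc, hm₁, mul_assoc, hm₂, ← mul_assoc]⟩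

theorem QuasiCentral.pow {a : M} (ha : QuasiCentral a) : ∀ n : ℕ, QuasiCentral (a ^ n)
  | 0 => by simpa using QuasiCentral.one
  | n + 1 => by simpa only [pow_succ] using (ha.pow n).mul ha

theorem QuasiCentral.exists_mul_eq_mul {a : M} (ha : QuasiCentral a) (m : M) :
    ∃ m', m * a = a * m' :=
  ((ha (m * a)).mpr ⟨m, rfl⟩).imp fun _ h => h

def rightComplements (lcm : M → M → M) (g : M) : Set M := {k | ∃ h, h * k = lcm h g}

def leftCommonMultiples (S : Set M) : Set M := {D | ∀ s ∈ S, LeftDvd s D}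

theorem mem_leftCommonMultiples_rightComplements_of_quasiCentral
    (hcl : ∀ a b c : M, a * b = a * c → b = c) (lcm : M → M → M)
    (hlcm_min : ∀ a b k, LeftDvd a k → LeftDvd b k → LeftDvd (lcm a b) k)
    {g Δ : M} (hΔ : QuasiCentral Δ) (hgΔ : LeftDvd g Δ) :
    Δ ∈ leftCommonMultiples (rightComplements lcm g) := by
  rintro k ⟨h, hk⟩
  obtain ⟨h', hh'⟩ := hΔ.exists_mul_eq_mul h
  have hg : LeftDvd g (h * Δ) := by
    obtain ⟨a, rfl⟩ := hgΔ
    exact ⟨a * h', by rw [hh', mul_assoc]⟩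
  obtain ⟨c, hc⟩ := hlcm_min h g _ ⟨Δ, rfl⟩ hg
  exact ⟨c, hcl h _ _ (by rw [hc, ← hk, mul_assoc])⟩

theorem exists_leftLcm_of_mem_leftCommonMultiples
    (hcl : ∀ a b c : M, a * b = a * c → b = c)
    (hcr : ∀ a b c : M, b * a = c * a → b = c)
    (hwf : WellFounded (fun w w' : M => (∃ w1 w2, w' = w1 * w * w2) ∧ w ≠ w'))
    (lcm : M → M → M)
    (hlcm_left : ∀ a b, LeftDvd a (lcm a b))
    (hlcm_right : ∀ a b, LeftDvd b (lcm a b))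
    (hlcm_min : ∀ a b k, LeftDvd a k → LeftDvd b k → LeftDvd (lcm a b) k)
    {S : Set M} {B : M} (hB : B ∈ leftCommonMultiples S) :
    ∃ D ∈ leftCommonMultiples S, ∀ D' ∈ leftCommonMultiples S, LeftDvd D D' := by
  set T : Set M := {t | ∀ D' ∈ leftCommonMultiples S, LeftDvd t D'}
  have hT_lcm : ∀ t ∈ T, ∀ s ∈ S, lcm t s ∈ T :=
    fun t ht s hs D' hD' => hlcm_min t s D' (ht D' hD') (hD' s hs)
  have hT_one : (1 : M) ∈ T := fun D' _ => ⟨D', (one_mul D').symm⟩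
  obtain ⟨c, ⟨t, ht, htc⟩, hmin⟩ :=
    hwf.has_min {c | ∃ t ∈ T, B = t * c} ⟨B, 1, hT_one, (one_mul B).symm⟩
  refine ⟨t, fun s hs => ?_, ht⟩
  obtain ⟨c₁, hc₁⟩ := hT_lcm t ht s hs B hB
  obtain ⟨e, he⟩ := hlcm_left t s
  have hc : c = e * c₁ := hcl t _ _ (by rw [← htc, ← mul_assoc, ← he, hc₁])
  have hc₁c : c₁ = c := by
    by_contra hne
    exact hmin c₁ ⟨_, hT_lcm t ht s hs, hc₁⟩ ⟨⟨e, 1, by rw [hc, mul_one]⟩, hne⟩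
  have htlcm : t = lcm t s := hcr c _ _ (by rw [← htc, hc₁, hc₁c])
  exact htlcm ▸ hlcm_right t s

end LeftLcm

/-- in a cancellative noetherian (hence atomic) monoid with lcms for
left-divisibility and a quasi-central element `Δ` such that every element
left-divides a power of `Δ`, for every `g` the set of right complements
`{h⁻¹(h ∨ g) : h ∈ M}` has an lcm `Δ_g` for left-divisibility; moreover `g`
left-divides `Δ_g` and `M·Δ_g ⊆ g·M`. -/
theorem stmt_6 (M : Type*) [Monoid M]
    (hcl : ∀ a b c : M, a * b = a * c → b = c)
    (hcr : ∀ a b c : M, b * a = c * a → b = c)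
    (hwf : WellFounded (fun w w' : M => (∃ w1 w2, w' = w1 * w * w2) ∧ w ≠ w'))
    (lcm : M → M → M)
    (hlcm_left : ∀ a b, LeftDvd a (lcm a b))
    (hlcm_right : ∀ a b, LeftDvd b (lcm a b))
    (hlcm_min : ∀ a b k, LeftDvd a k → LeftDvd b k → LeftDvd (lcm a b) k)
    (Δ : M) (hΔqc : QuasiCentral Δ)
    (hΔpow : ∀ g : M, ∃ n : ℕ, LeftDvd g (Δ ^ n))
    (g : M) :
    ∃ D : M,
      (∀ h k : M, h * k = lcm h g → LeftDvd k D) ∧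
      (∀ D' : M, (∀ h k : M, h * k = lcm h g → LeftDvd k D') → LeftDvd D D') ∧
      LeftDvd g D ∧
      (∀ m : M, ∃ m', m * D = g * m') := by
  obtain ⟨n, hgn⟩ := hΔpow g
  obtain ⟨D, hD, hleast⟩ := exists_leftLcm_of_mem_leftCommonMultiples hcl hcr hwf lcm
    hlcm_left hlcm_right hlcm_min
    (mem_leftCommonMultiples_rightComplements_of_quasiCentral hcl lcm hlcm_min (hΔqc.pow n) hgn)
  have hcomp : ∀ h k : M, h * k = lcm h g → LeftDvd k D := fun h k hk => hD k ⟨h, hk⟩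
  refine ⟨D, hcomp, fun D' hD' => hleast D' fun k ⟨h, hk⟩ => hD' h k hk, ?_, fun m => ?_⟩
  · exact (hlcm_right 1 g).trans (hcomp 1 _ (one_mul _))
  · obtain ⟨k, hk⟩ := hlcm_left m g
    obtain ⟨e, rfl⟩ := hcomp m k hk.symm
    obtain ⟨w, hw⟩ := hlcm_right m g
    exact ⟨w * e, by rw [← mul_assoc, ← hk, hw, mul_assoc]⟩
end

section
/- Let M be a Garside monoid with Garside element Δ, and let g be an element of QZ(G) of its group of fractions G (so gM = Mg in G). Writing g = a^{-1}b with a, b in M prime to each other for left-divisibility (the left greedy normal form), both a and b lie in QZ(M). Consequently QZ(G) is the group of fractions of QZ(M). -/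
/-- Right-divisibility in a monoid. -/
def GarsideRightDvd {M : Type*} [Monoid M] (a b : M) : Prop := ∃ c, b = c * a

/-- An atom of a monoid: a non-identity element that is not a product of two
non-identity elements. -/
def MonAtom {M : Type*} [Monoid M] (a : M) : Prop :=
  a ≠ 1 ∧ ∀ b c : M, a = b * c → b = 1 ∨ c = 1

/-- A Garside-monoid structure on a monoid `M`: `M` is cancellative, noetherian
for the factor relation, its left- and right-divisibility orders are lattices,
and it has a quasi-central Garside element `Δ` whose powers are left-divisible
by every element. -/
structure GarsideStruct (M : Type*) [Monoid M] where
  cancel_left : ∀ a b c : M, a * b = a * c → b = c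
  cancel_right : ∀ a b c : M, b * a = c * a → b = c
  wf : WellFounded (fun w w' : M => (∃ w1 w2, w' = w1 * w * w2) ∧ w ≠ w')
  lcmL : M → M → M
  lcmL_left : ∀ a b, LeftDvd a (lcmL a b)
  lcmL_right : ∀ a b, LeftDvd b (lcmL a b)
  lcmL_min : ∀ a b k, LeftDvd a k → LeftDvd b k → LeftDvd (lcmL a b) k
  gcdL : M → M → M
  gcdL_left : ∀ a b, LeftDvd (gcdL a b) a
  gcdL_right : ∀ a b, LeftDvd (gcdL a b) b
  gcdL_max : ∀ a b k, LeftDvd k a → LeftDvd k b → LeftDvd k (gcdL a b)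
  lcmR : M → M → M
  lcmR_left : ∀ a b, GarsideRightDvd a (lcmR a b)
  lcmR_right : ∀ a b, GarsideRightDvd b (lcmR a b)
  lcmR_min : ∀ a b k, GarsideRightDvd a k → GarsideRightDvd b k → GarsideRightDvd (lcmR a b) k
  gcdR : M → M → M
  gcdR_left : ∀ a b, GarsideRightDvd (gcdR a b) a
  gcdR_right : ∀ a b, GarsideRightDvd (gcdR a b) b
  gcdR_max : ∀ a b k, GarsideRightDvd k a → GarsideRightDvd k b → GarsideRightDvd k (gcdR a b)
  delta : M
  delta_qc : QuasiCentral delta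
  delta_pow : ∀ g : M, ∃ n : ℕ, LeftDvd g (delta ^ n)

/-!
For `g ∈ QZ(G)` and `x ∈ M`, `x g ∈ M` iff `g x ∈ M`. If `g = a⁻¹ b` with `a, b` left-coprime,
the `x` with `x g ∈ M` are exactly the left multiples of `a` (a common multiple `x b₀ = y a₀` of
the lcm-complements of `a` and `b` is a multiple of their lcm `a b₀`). Dually, writing
`g = b₀ a₀⁻¹` with `a₀, b₀` right-coprime, the `x` with `g x ∈ M` are the right multiples of
`a₀`. Hence `M a = a₀ M`, so `a = a₀ u` and `a₀ = v a`; then `a = v a u`, which noetherianity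
only allows for `u = v = 1`, and `M a = a M`. The same argument for `g⁻¹ = b⁻¹ a` handles `b`.
The right-handed statements are the left-handed ones in the opposite monoid.
-/

open MulOpposite

section

variable {M : Type*} [Monoid M]

lemma leftDvd_op_iff {a b : Mᵐᵒᵖ} : LeftDvd a b ↔ GarsideRightDvd a.unop b.unop :=
  ⟨fun ⟨c, hc⟩ => ⟨c.unop, congrArg unop hc⟩, fun ⟨c, hc⟩ => ⟨op c, congrArg op hc⟩⟩

lemma garsideRightDvd_op_iff {a b : Mᵐᵒᵖ} : GarsideRightDvd a b ↔ LeftDvd a.unop b.unop :=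
  ⟨fun ⟨c, hc⟩ => ⟨c.unop, congrArg unop hc⟩, fun ⟨c, hc⟩ => ⟨op c, congrArg op hc⟩⟩

lemma quasiCentral_op_iff {p : Mᵐᵒᵖ} : QuasiCentral p ↔ QuasiCentral p.unop :=
  ⟨fun h x => (leftDvd_op_iff.symm.trans ((h (op x)).trans garsideRightDvd_op_iff)).symm,
   fun h x => (leftDvd_op_iff.trans ((h x.unop).symm.trans garsideRightDvd_op_iff.symm))⟩

lemma QuasiCentral.mul_s10 {p q : M} (hp : QuasiCentral p) (hq : QuasiCentral q) :
    QuasiCentral (p * q) := by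
  intro x
  constructor
  · rintro ⟨m, rfl⟩
    obtain ⟨m₁, hm₁⟩ := (hq _).1 ⟨m, rfl⟩
    obtain ⟨m₂, hm₂⟩ := (hp _).1 ⟨m₁, rfl⟩
    exact ⟨m₂, by rw [mul_assoc, hm₁, ← mul_assoc, hm₂, mul_assoc]⟩
  · rintro ⟨m, rfl⟩
    obtain ⟨m₁, hm₁⟩ := (hp _).2 ⟨m, rfl⟩
    obtain ⟨m₂, hm₂⟩ := (hq _).2 ⟨m₁, rfl⟩
    exact ⟨m₂, by rw [← mul_assoc, hm₁, mul_assoc, hm₂, ← mul_assoc]⟩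

lemma QuasiCentral.pow_s10 {p : M} (hp : QuasiCentral p) (n : ℕ) : QuasiCentral (p ^ n) := by
  induction n with
  | zero => simp [QuasiCentral]
  | succ n ih => rw [pow_succ]; exact ih.mul_s10 hp

namespace GarsideStruct

lemma exists_garsideRightDvd_delta_pow (GS : GarsideStruct M) (x : M) :
    ∃ n : ℕ, GarsideRightDvd x (GS.delta ^ n) := by
  obtain ⟨n, w, hw⟩ := GS.delta_pow x
  obtain ⟨w', hw'⟩ := (GS.delta_qc.pow_s10 n (GS.delta ^ n * w)).1 ⟨w, rfl⟩
  refine ⟨n, w', GS.cancel_right w _ _ ?_⟩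
  rw [mul_assoc, ← hw, hw']

def op (GS : GarsideStruct M) : GarsideStruct Mᵐᵒᵖ where
  cancel_left a b c h := unop_injective (GS.cancel_right a.unop b.unop c.unop (congrArg unop h))
  cancel_right a b c h := unop_injective (GS.cancel_left a.unop b.unop c.unop (congrArg unop h))
  wf := by
    refine Subrelation.wf ?_ (InvImage.wf unop GS.wf)
    rintro w w' ⟨⟨w₁, w₂, rfl⟩, hne⟩
    exact ⟨⟨w₂.unop, w₁.unop, by simp [mul_assoc]⟩, fun h => hne (unop_injective h)⟩
  lcmL a b := MulOpposite.op (GS.lcmR a.unop b.unop)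
  lcmL_left a b := leftDvd_op_iff.2 (GS.lcmR_left _ _)
  lcmL_right a b := leftDvd_op_iff.2 (GS.lcmR_right _ _)
  lcmL_min a b k ha hb :=
    leftDvd_op_iff.2 (GS.lcmR_min _ _ _ (leftDvd_op_iff.1 ha) (leftDvd_op_iff.1 hb))
  gcdL a b := MulOpposite.op (GS.gcdR a.unop b.unop)
  gcdL_left a b := leftDvd_op_iff.2 (GS.gcdR_left _ _)
  gcdL_right a b := leftDvd_op_iff.2 (GS.gcdR_right _ _)
  gcdL_max a b k ha hb :=
    leftDvd_op_iff.2 (GS.gcdR_max _ _ _ (leftDvd_op_iff.1 ha) (leftDvd_op_iff.1 hb))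
  lcmR a b := MulOpposite.op (GS.lcmL a.unop b.unop)
  lcmR_left a b := garsideRightDvd_op_iff.2 (GS.lcmL_left _ _)
  lcmR_right a b := garsideRightDvd_op_iff.2 (GS.lcmL_right _ _)
  lcmR_min a b k ha hb := garsideRightDvd_op_iff.2
    (GS.lcmL_min _ _ _ (garsideRightDvd_op_iff.1 ha) (garsideRightDvd_op_iff.1 hb))
  gcdR a b := MulOpposite.op (GS.gcdL a.unop b.unop)
  gcdR_left a b := garsideRightDvd_op_iff.2 (GS.gcdL_left _ _)
  gcdR_right a b := garsideRightDvd_op_iff.2 (GS.gcdL_right _ _)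
  gcdR_max a b k ha hb := garsideRightDvd_op_iff.2
    (GS.gcdL_max _ _ _ (garsideRightDvd_op_iff.1 ha) (garsideRightDvd_op_iff.1 hb))
  delta := MulOpposite.op GS.delta
  delta_qc := quasiCentral_op_iff.2 GS.delta_qc
  delta_pow g := by
    obtain ⟨n, hn⟩ := GS.exists_garsideRightDvd_delta_pow g.unop
    exact ⟨n, leftDvd_op_iff.2 (by rwa [unop_pow])⟩

/-- If `v ≠ 1`, the elements `x * u ^ k` would form an infinite descending chain of factors. -/
lemma eq_one_of_eq_mul_mul (GS : GarsideStruct M) {x u v : M} (h : x = v * x * u) :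
    v = 1 ∧ u = 1 := by
  have hstep : ∀ k : ℕ, x * u ^ k = v * (x * u ^ (k + 1)) := fun k => by
    rw [pow_succ', ← mul_assoc, ← mul_assoc, ← h]
  have hv : v = 1 := by
    by_contra hv
    obtain ⟨_, ⟨k, rfl⟩, hmin⟩ :=
      GS.wf.has_min (Set.range fun k : ℕ => x * u ^ k) ⟨x * u ^ 0, 0, rfl⟩
    refine hmin _ ⟨k + 1, rfl⟩ ⟨⟨v, 1, by rw [mul_one, ← hstep]⟩, fun heq => hv ?_⟩
    exact (GS.cancel_right _ 1 v (by rw [one_mul, ← hstep k]; exact heq)).symm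
  subst hv
  exact ⟨rfl, (GS.cancel_left x 1 u (by simpa using h)).symm⟩

lemma eq_one_of_leftDvd_one (GS : GarsideStruct M) {t : M} (h : LeftDvd t 1) : t = 1 := by
  obtain ⟨c, hc⟩ := h
  exact (GS.eq_one_of_eq_mul_mul (x := 1) (v := t) (u := c) (by rw [mul_one]; exact hc)).1

lemma gcdL_eq_one_symm (GS : GarsideStruct M) {a b : M} (h : GS.gcdL a b = 1) :
    GS.gcdL b a = 1 :=
  GS.eq_one_of_leftDvd_one (h ▸ GS.gcdL_max a b _ (GS.gcdL_right b a) (GS.gcdL_left b a))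

lemma exists_gcdL_eq_one (GS : GarsideStruct M) (c' d' : M) :
    ∃ s c d, c' = s * c ∧ d' = s * d ∧ GS.gcdL c d = 1 := by
  obtain ⟨c, hc⟩ := GS.gcdL_left c' d'
  obtain ⟨d, hd⟩ := GS.gcdL_right c' d'
  refine ⟨_, c, d, hc, hd, ?_⟩
  obtain ⟨c₁, hc₁⟩ := GS.gcdL_left c d
  obtain ⟨d₁, hd₁⟩ := GS.gcdL_right c d
  obtain ⟨r, hr⟩ : LeftDvd (GS.gcdL c' d' * GS.gcdL c d) (GS.gcdL c' d') :=
    GS.gcdL_max c' d' _ ⟨c₁, by rw [mul_assoc, ← hc₁, ← hc]⟩ ⟨d₁, by rw [mul_assoc, ← hd₁, ← hd]⟩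
  refine GS.eq_one_of_leftDvd_one ⟨r, GS.cancel_left (GS.gcdL c' d') _ _ ?_⟩
  rw [mul_one, ← mul_assoc, ← hr]

lemma exists_gcdR_eq_one (GS : GarsideStruct M) (c' d' : M) :
    ∃ s c d, c' = c * s ∧ d' = d * s ∧ GS.gcdR c d = 1 := by
  obtain ⟨s, c, d, hc, hd, h⟩ :=
    GS.op.exists_gcdL_eq_one (MulOpposite.op c') (MulOpposite.op d')
  exact ⟨s.unop, c.unop, d.unop, congrArg unop hc, congrArg unop hd, congrArg unop h⟩

lemma lcmR_eq_lcmL (GS : GarsideStruct M) {a b a₀ b₀ : M} (hab : GS.gcdL a b = 1)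
    (ha : GS.lcmL a b = a * b₀) (hb : GS.lcmL a b = b * a₀) : GS.lcmR b₀ a₀ = GS.lcmL a b := by
  obtain ⟨t, ht⟩ := GS.lcmR_min b₀ a₀ _ ⟨a, ha⟩ ⟨b, hb⟩
  obtain ⟨u, hu⟩ := GS.lcmR_left b₀ a₀
  obtain ⟨w, hw⟩ := GS.lcmR_right b₀ a₀
  have hta : LeftDvd t a := ⟨u, GS.cancel_right b₀ _ _ (by rw [← ha, ht, hu, mul_assoc])⟩
  have htb : LeftDvd t b := ⟨w, GS.cancel_right a₀ _ _ (by rw [← hb, ht, hw, mul_assoc])⟩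
  have ht1 : t = 1 := GS.eq_one_of_leftDvd_one (hab ▸ GS.gcdL_max a b t hta htb)
  rw [ht, ht1, one_mul]

end GarsideStruct

variable {G : Type*} [Group G]

/-- `g ∈ QZ(G)`, for `G` the group of fractions of `M` embedded by `φ`. -/
def QuasiCentralOver (φ : M →* G) (g : G) : Prop :=
  ∀ x : G, (∃ m : M, x = g * φ m) ↔ (∃ m : M, x = φ m * g)

namespace QuasiCentralOver

variable {φ : M →* G} {g : G}

lemma inv (hg : QuasiCentralOver φ g) : QuasiCentralOver φ g⁻¹ := by
  intro x
  constructor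
  · rintro ⟨m, rfl⟩
    obtain ⟨m', hm'⟩ := (hg (φ m * g)).2 ⟨m, rfl⟩
    exact ⟨m', by rw [eq_mul_inv_iff_mul_eq, mul_assoc, hm', inv_mul_cancel_left]⟩
  · rintro ⟨m, rfl⟩
    obtain ⟨m', hm'⟩ := (hg (g * φ m)).1 ⟨m, rfl⟩
    exact ⟨m', by rw [eq_inv_mul_iff_mul_eq, ← mul_assoc, hm', mul_inv_cancel_right]⟩

lemma mul_mem_iff (hg : QuasiCentralOver φ g) (x : M) :
    (∃ y, φ x * g = φ y) ↔ ∃ y, g * φ x = φ y := by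
  constructor
  · rintro ⟨y, hy⟩
    obtain ⟨m, hm⟩ := (hg (g * φ y)).1 ⟨y, rfl⟩
    exact ⟨m, by rw [eq_mul_inv_of_mul_eq hy, ← mul_assoc, hm, mul_inv_cancel_right]⟩
  · rintro ⟨y, hy⟩
    obtain ⟨m, hm⟩ := (hg (φ y * g)).2 ⟨y, rfl⟩
    exact ⟨m, by rw [eq_inv_mul_of_mul_eq hy, mul_assoc, hm, inv_mul_cancel_left]⟩

end QuasiCentralOver

namespace GarsideStruct

variable {φ : M →* G}

lemma exists_inv_mul_eq_mul_inv (GS : GarsideStruct M) (a b : M) :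
    ∃ a₀ b₀, GS.gcdR a₀ b₀ = 1 ∧ (φ a)⁻¹ * φ b = φ b₀ * (φ a₀)⁻¹ := by
  obtain ⟨b₀', hb₀'⟩ := GS.lcmL_left a b
  obtain ⟨a₀', ha₀'⟩ := GS.lcmL_right a b
  obtain ⟨s, a₀, b₀, rfl, rfl, hab₀⟩ := GS.exists_gcdR_eq_one a₀' b₀'
  have hcross : a * b₀ = b * a₀ :=
    GS.cancel_right s _ _ (by rw [mul_assoc, mul_assoc, ← hb₀', ← ha₀'])
  refine ⟨a₀, b₀, hab₀, ?_⟩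
  rw [inv_mul_eq_iff_eq_mul, ← mul_assoc, ← map_mul, hcross, map_mul, mul_inv_cancel_right]

lemma garsideRightDvd_iff_exists_mul_eq (GS : GarsideStruct M) (hφ : Function.Injective φ)
    {a b : M} {g : G} (hab : GS.gcdL a b = 1) (hg : g = (φ a)⁻¹ * φ b) (x : M) :
    GarsideRightDvd a x ↔ ∃ y, φ x * g = φ y := by
  obtain ⟨b₀, ha⟩ := GS.lcmL_left a b
  obtain ⟨a₀, hb⟩ := GS.lcmL_right a b
  constructor
  · rintro ⟨v, rfl⟩
    exact ⟨v * b, by rw [hg, map_mul, map_mul, mul_assoc, mul_inv_cancel_left]⟩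
  · rintro ⟨y, hy⟩
    have hcross : φ a * φ b₀ = φ b * φ a₀ := by rw [← map_mul, ← map_mul, ← ha, ← hb]
    have hxy : x * b₀ = y * a₀ := hφ <| calc
      φ (x * b₀) = φ x * ((φ a)⁻¹ * (φ a * φ b₀)) := by rw [map_mul, inv_mul_cancel_left]
      _ = φ x * g * φ a₀ := by rw [hcross, hg]; simp only [mul_assoc]
      _ = φ (y * a₀) := by rw [hy, map_mul]
    obtain ⟨e, he⟩ := GS.lcmR_min b₀ a₀ _ ⟨x, rfl⟩ ⟨y, hxy⟩
    rw [GS.lcmR_eq_lcmL hab ha hb, ha, ← mul_assoc] at he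
    exact ⟨e, GS.cancel_right _ _ _ he⟩

lemma leftDvd_iff_exists_mul_eq (GS : GarsideStruct M) (hφ : Function.Injective φ)
    {a b : M} {g : G} (hab : GS.gcdR a b = 1) (hg : g = φ b * (φ a)⁻¹) (x : M) :
    LeftDvd a x ↔ ∃ y, g * φ x = φ y := by
  have hφop : Function.Injective φ.op := fun x y h => unop_injective (hφ (op_injective h))
  have := GS.op.garsideRightDvd_iff_exists_mul_eq hφop (a := MulOpposite.op a)
    (b := MulOpposite.op b) (g := MulOpposite.op g) (congrArg MulOpposite.op hab)
    (by rw [hg]; simp) (MulOpposite.op x)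
  rw [garsideRightDvd_op_iff, op_surjective.exists] at this
  simpa [← op_mul, op_inj] using this

lemma quasiCentral_of_eq_inv_mul (GS : GarsideStruct M) (hφ : Function.Injective φ) {g : G}
    (hg : QuasiCentralOver φ g) {a b : M} (hab : GS.gcdL a b = 1) (hgab : g = (φ a)⁻¹ * φ b) :
    QuasiCentral a := by
  obtain ⟨a₀, b₀, hab₀, hg₀⟩ := GS.exists_inv_mul_eq_mul_inv (φ := φ) a b
  have key : ∀ x, GarsideRightDvd a x ↔ LeftDvd a₀ x := fun x =>
    (GS.garsideRightDvd_iff_exists_mul_eq hφ hab hgab x).trans <| (hg.mul_mem_iff x).trans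
      (GS.leftDvd_iff_exists_mul_eq hφ hab₀ (hgab.trans hg₀) x).symm
  obtain ⟨v, hv⟩ := (key a₀).2 ⟨1, (mul_one a₀).symm⟩
  obtain ⟨u, hu⟩ := (key a).1 ⟨1, (one_mul a).symm⟩
  obtain rfl : u = 1 := (GS.eq_one_of_eq_mul_mul (hu.trans (by rw [hv]))).2
  obtain rfl : a = a₀ := hu.trans (mul_one a₀)
  exact fun x => (key x).symm

lemma quasiCentral_and_quasiCentral_of_eq_inv_mul (GS : GarsideStruct M)
    (hφ : Function.Injective φ) {g : G} (hg : QuasiCentralOver φ g) {a b : M}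
    (hab : GS.gcdL a b = 1) (hgab : g = (φ a)⁻¹ * φ b) : QuasiCentral a ∧ QuasiCentral b :=
  ⟨GS.quasiCentral_of_eq_inv_mul hφ hg hab hgab, GS.quasiCentral_of_eq_inv_mul hφ hg.inv
    (GS.gcdL_eq_one_symm hab) (by rw [hgab, mul_inv_rev, inv_inv])⟩

end GarsideStruct

end

/-- for an element `g = (φ a)⁻¹ * φ b` of the quasi-centralizer
of the group of fractions `G` of a Garside monoid `M`, written in left greedy
normal form (`a, b` prime to each other for left-divisibility), both `a` and
`b` are quasi-central in `M`; consequently `QZ(G)` is the group of fractions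
of `QZ(M)`. -/
theorem stmt_10 (M : Type*) [Monoid M] (GS : GarsideStruct M)
    (G : Type*) [Group G] (φ : M →* G) (hφ : Function.Injective φ)
    (hfrac : ∀ g : G, ∃ a b : M, g = (φ a)⁻¹ * φ b)
    (g : G) (hg : ∀ x : G, (∃ m : M, x = g * φ m) ↔ (∃ m : M, x = φ m * g))
    (a b : M) (hab : GS.gcdL a b = 1) (hgab : g = (φ a)⁻¹ * φ b) :
    QuasiCentral a ∧ QuasiCentral b ∧
    ∀ h : G, (∀ x : G, (∃ m : M, x = h * φ m) ↔ (∃ m : M, x = φ m * h)) →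
      ∃ c d : M, QuasiCentral c ∧ QuasiCentral d ∧ h = (φ c)⁻¹ * φ d := by
  obtain ⟨hqa, hqb⟩ := GS.quasiCentral_and_quasiCentral_of_eq_inv_mul hφ hg hab hgab
  refine ⟨hqa, hqb, fun h hh => ?_⟩
  obtain ⟨c', d', rfl⟩ := hfrac h
  obtain ⟨s, c, d, rfl, rfl, hcd⟩ := GS.exists_gcdL_eq_one c' d'
  have hred : (φ (s * c))⁻¹ * φ (s * d) = (φ c)⁻¹ * φ d := by
    rw [map_mul, map_mul, mul_inv_rev, mul_assoc, inv_mul_cancel_left]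
  rw [hred] at hh ⊢
  obtain ⟨hqc, hqd⟩ := GS.quasiCentral_and_quasiCentral_of_eq_inv_mul hφ hh hcd rfl
  exact ⟨c, d, hqc, hqd, rfl⟩
end

section
/- Consider the free group F_2 on two letters with the presentation ⟨ a_i, i ∈ ℤ | a_i a_{i+1} = a_j a_{j+1} for all i, j ∈ ℤ ⟩ (where a_0 = a, a_1 = b). Then the group defined by this presentation is isomorphic to the free group on two generators, under the map sending a_0 ↦ a, a_1 ↦ b, and more generally a_{i+2} = Δ^{-1} a_i Δ where Δ = a_0 a_1. -/
/-- `Δ = a b` in the free group on two letters (with `a = of false`,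
`b = of true`). -/
def δF2 : FreeGroup Bool := FreeGroup.of false * FreeGroup.of true

/-- The family `a_i`, `i ∈ ℤ`, in the free group: `a_{2k} = Δ^{-k} a Δ^k` and
`a_{2k+1} = Δ^{-k} b Δ^k`, so that `a_0 = a`, `a_1 = b` and
`a_{i+2} = Δ⁻¹ a_i Δ`. -/
noncomputable def aF2 (i : ℤ) : FreeGroup Bool :=
  δF2 ^ (-(i.ediv 2)) * (if i.emod 2 = 0 then FreeGroup.of false else FreeGroup.of true) *
    δF2 ^ (i.ediv 2)

/-- The relations `a_i a_{i+1} = a_j a_{j+1}` on the free group over ℤ. -/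
def f2Rels : Set (FreeGroup ℤ) :=
  {r | ∃ i j : ℤ, r = FreeGroup.of i * FreeGroup.of (i + 1) *
    (FreeGroup.of j * FreeGroup.of (j + 1))⁻¹}

/-! In any group, a family `x : ℤ → G` with `x i * x (i + 1) = d` for all `i` is determined
by `x 0`, since `x (i + 1) = (x i)⁻¹ * d`; and a family with `x (i + 2) = d⁻¹ * x i * d`
satisfies all these relations as soon as `x 0 * x 1 = d`. The second fact says that the
elements `a_i` of `F₂` satisfy the defining relations, which gives a map from the presented
group to `F₂`; the first one shows that `a ↦ a_0`, `b ↦ a_1` is inverse to it. -/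

section ShiftedFamilies

variable {G : Type*} [Group G] {d : G}

theorem mul_eq_iff_mul_conj_eq {u v : G} :
    u * v = d ↔ v * (d⁻¹ * u * d) = d := by
  rw [show v * (d⁻¹ * u * d) = v * d⁻¹ * u * d by group, mul_eq_right, ← mul_eq_one_comm,
    ← mul_assoc, mul_inv_eq_one]

theorem mul_add_one_eq_of_add_two_eq_conj {x : ℤ → G} (hx : ∀ i, x (i + 2) = d⁻¹ * x i * d)
    (h₀ : x 0 * x 1 = d) (i : ℤ) : x i * x (i + 1) = d := by
  have step (i : ℤ) : x i * x (i + 1) = d ↔ x (i + 1) * x (i + 1 + 1) = d := by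
    rw [add_assoc, one_add_one_eq_two, hx, mul_eq_iff_mul_conj_eq]
  induction i using Int.induction_on with
  | zero => simpa using h₀
  | succ n ih => exact (step n).1 ih
  | pred n ih => exact (step (-n - 1)).2 (by rwa [sub_add_cancel])

theorem eq_of_forall_mul_add_one_eq {x y : ℤ → G} (hx : ∀ i, x i * x (i + 1) = d)
    (hy : ∀ i, y i * y (i + 1) = d) (h₀ : x 0 = y 0) : x = y := by
  funext i
  induction i using Int.induction_on with
  | zero => exact h₀
  | succ n ih => rw [eq_inv_mul_of_mul_eq (hx n), eq_inv_mul_of_mul_eq (hy n), ih]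
  | pred n ih =>
    rw [eq_mul_inv_of_mul_eq (hx (-n - 1)), eq_mul_inv_of_mul_eq (hy (-n - 1)), sub_add_cancel, ih]

end ShiftedFamilies

theorem aF2_def (i : ℤ) : aF2 i = δF2 ^ (-(i / 2)) *
    (if i % 2 = 0 then FreeGroup.of false else FreeGroup.of true) * δF2 ^ (i / 2) :=
  rfl

theorem aF2_zero : aF2 0 = FreeGroup.of false := by simp [aF2_def]

theorem aF2_one : aF2 1 = FreeGroup.of true := by simp [aF2_def]

theorem aF2_add_two (i : ℤ) : aF2 (i + 2) = δF2⁻¹ * aF2 i * δF2 := by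
  rw [aF2_def, aF2_def, Int.add_ediv_of_dvd_right (dvd_refl 2), Int.ediv_self two_ne_zero,
    Int.add_emod_right]
  group

theorem aF2_mul_aF2_add_one (i : ℤ) : aF2 i * aF2 (i + 1) = δF2 :=
  mul_add_one_eq_of_add_two_eq_conj aF2_add_two (by rw [aF2_zero, aF2_one, δF2]) i

theorem of_mul_of_add_one (i : ℤ) :
    (PresentedGroup.of i * PresentedGroup.of (i + 1) : PresentedGroup f2Rels) =
      PresentedGroup.of 0 * PresentedGroup.of 1 :=
  PresentedGroup.mk_eq_mk_of_mul_inv_mem (rels := f2Rels)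
    (x := FreeGroup.of i * FreeGroup.of (i + 1)) (y := FreeGroup.of 0 * FreeGroup.of (0 + 1))
    ⟨i, 0, rfl⟩

theorem lift_aF2_eq_one_of_mem : ∀ r ∈ f2Rels, FreeGroup.lift aF2 r = 1 := by
  rintro _ ⟨i, j, rfl⟩
  simp only [map_mul, map_inv, FreeGroup.lift_apply_of, aF2_mul_aF2_add_one, mul_inv_cancel]

noncomputable def presentedToFree : PresentedGroup f2Rels →* FreeGroup Bool :=
  PresentedGroup.toGroup lift_aF2_eq_one_of_mem

def freeToPresented : FreeGroup Bool →* PresentedGroup f2Rels :=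
  FreeGroup.lift fun b => PresentedGroup.of (if b then 1 else 0)

theorem freeToPresented_aF2 (i : ℤ) : freeToPresented (aF2 i) = PresentedGroup.of i := by
  have h := eq_of_forall_mul_add_one_eq (x := fun i => freeToPresented (aF2 i))
    (y := PresentedGroup.of) (d := PresentedGroup.of 0 * PresentedGroup.of 1)
    (fun i => by rw [← map_mul, aF2_mul_aF2_add_one]; simp [δF2, freeToPresented])
    of_mul_of_add_one (by simp [aF2_zero, freeToPresented])
  exact congrFun h i

/-- the group presented by generators `a_i` (`i ∈ ℤ`) and
relations `a_i a_{i+1} = a_j a_{j+1}` is isomorphic to the free group on two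
letters, the isomorphism sending `a_0 ↦ a`, `a_1 ↦ b`, and in general
`a_i ↦ Δ^{-⌊i/2⌋} a_{i mod 2} Δ^{⌊i/2⌋}` (so `a_{i+2} = Δ⁻¹ a_i Δ` with
`Δ = a_0 a_1 = a b`). -/
theorem stmt_15 :
    ∃ e : PresentedGroup f2Rels ≃* FreeGroup Bool,
      ∀ i : ℤ, e (PresentedGroup.of i) = aF2 i := by
  have left_inv : freeToPresented.comp presentedToFree = MonoidHom.id _ :=
    PresentedGroup.ext fun i => by simp [presentedToFree, freeToPresented_aF2]
  have right_inv : presentedToFree.comp freeToPresented = MonoidHom.id _ :=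
    FreeGroup.ext_hom _ _ fun b => by
      cases b <;> simp [presentedToFree, freeToPresented, aF2_zero, aF2_one]
  exact ⟨presentedToFree.toMulEquiv freeToPresented left_inv right_inv,
    fun i => PresentedGroup.toGroup.of lift_aF2_eq_one_of_mem⟩
end
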